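/- arXiv:2508.00512 — 5 statements merged into one kernel-verified Lean document; each statement's English description precedes it below -/
import Mathlib

section
/- Let R be a connected topological space and f, g, h : R → ℝP¹ be continuous functions whose graphs are pairwise disjoint (i.e., f(r) ≠ g(r), f(r) ≠ h(r), g(r) ≠ h(r) for all r ∈ R). Then the set {r ∈ R : [f(r), g(r), h(r)]} is either empty or equal to R. -/
open OnePoint
abbrev RP1 := OnePoint ℝ

/-- Strict cyclic order on the real projective line `ℝ ∪ {∞}`, extending
the usual order on `ℝ`: `[a,b,c]` for reals iff `a<b<c` or `b<c<a` or `c<a<b`,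
and `[a,b,∞]` iff `a<b` (plus cyclic permutations). -/
def sbtw' (x y z : RP1) : Prop :=
  (∃ a b c : ℝ, x = (a : RP1) ∧ y = (b : RP1) ∧ z = (c : RP1) ∧
    ((a < b ∧ b < c) ∨ (b < c ∧ c < a) ∨ (c < a ∧ a < b))) ∨
  (∃ a b : ℝ, x = (a : RP1) ∧ y = (b : RP1) ∧ z = ∞ ∧ a < b) ∨
  (∃ a b : ℝ, x = (b : RP1) ∧ y = ∞ ∧ z = (a : RP1) ∧ a < b) ∨
  (∃ a b : ℝ, x = ∞ ∧ y = (a : RP1) ∧ z = (b : RP1) ∧ a < b)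

lemma sbtw'_coe3 {a b c : ℝ} :
    sbtw' (a : RP1) (b : RP1) (c : RP1) ↔
      ((a < b ∧ b < c) ∨ (b < c ∧ c < a) ∨ (c < a ∧ a < b)) := by
  constructor
  · rintro (⟨a',b',c',ha,hb,hc,H⟩|⟨a',b',ha,hb,hc,H⟩|⟨a',b',ha,hb,hc,H⟩|⟨a',b',ha,hb,hc,H⟩) <;>
      simp_all [OnePoint.coe_eq_coe]
  · intro H; exact Or.inl ⟨a, b, c, rfl, rfl, rfl, H⟩

lemma sbtw'_cci {a b : ℝ} : sbtw' (a : RP1) (b : RP1) ∞ ↔ a < b := by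
  constructor
  · rintro (⟨a',b',c',ha,hb,hc,H⟩|⟨a',b',ha,hb,hc,H⟩|⟨a',b',ha,hb,hc,H⟩|⟨a',b',ha,hb,hc,H⟩) <;>
      simp_all [OnePoint.coe_eq_coe]
  · intro H; exact Or.inr (Or.inl ⟨a, b, rfl, rfl, rfl, H⟩)

lemma sbtw'_cic {a b : ℝ} : sbtw' (b : RP1) ∞ (a : RP1) ↔ a < b := by
  constructor
  · rintro (⟨a',b',c',ha,hb,hc,H⟩|⟨a',b',ha,hb,hc,H⟩|⟨a',b',ha,hb,hc,H⟩|⟨a',b',ha,hb,hc,H⟩) <;>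
      simp_all [OnePoint.coe_eq_coe]
  · intro H; exact Or.inr (Or.inr (Or.inl ⟨a, b, rfl, rfl, rfl, H⟩))

lemma sbtw'_icc {a b : ℝ} : sbtw' ∞ (a : RP1) (b : RP1) ↔ a < b := by
  constructor
  · rintro (⟨a',b',c',ha,hb,hc,H⟩|⟨a',b',ha,hb,hc,H⟩|⟨a',b',ha,hb,hc,H⟩|⟨a',b',ha,hb,hc,H⟩) <;>
      simp_all [OnePoint.coe_eq_coe]
  · intro H; exact Or.inr (Or.inr (Or.inr ⟨a, b, rfl, rfl, rfl, H⟩))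

lemma cases_RP1 (w : RP1) : w = ∞ ∨ ∃ c : ℝ, w = (c : RP1) := by
  induction w using OnePoint.rec with
  | infty => exact Or.inl rfl
  | coe c => exact Or.inr ⟨c, rfl⟩

lemma sbtw'_rotate {x y z : RP1} (h : sbtw' x y z) : sbtw' y z x := by
  rcases h with ⟨a,b,c,ha,hb,hc,H⟩|⟨a,b,ha,hb,hc,H⟩|⟨a,b,ha,hb,hc,H⟩|⟨a,b,ha,hb,hc,H⟩ <;>
    subst ha hb hc
  · exact Or.inl ⟨b, c, a, rfl, rfl, rfl, by tauto⟩
  · exact sbtw'_cic.mpr H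
  · exact sbtw'_icc.mpr H
  · exact sbtw'_cci.mpr H

lemma sbtw'_total (x y z : RP1) (hxy : x ≠ y) (hxz : x ≠ z) (hyz : y ≠ z) :
    sbtw' x y z ∨ sbtw' y x z := by
  induction x using OnePoint.rec with
  | infty =>
    induction y using OnePoint.rec with
    | infty => exact absurd rfl hxy
    | coe a =>
      induction z using OnePoint.rec with
      | infty => exact absurd rfl hxz
      | coe b =>
        rw [sbtw'_icc, sbtw'_cic]
        rcases lt_or_gt_of_ne (fun h : a = b => hyz (by rw [h])) with h | h
        · exact Or.inl h
        · exact Or.inr h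
  | coe a =>
    induction y using OnePoint.rec with
    | infty =>
      induction z using OnePoint.rec with
      | infty => exact absurd rfl hyz
      | coe b =>
        rw [sbtw'_cic, sbtw'_icc]
        rcases lt_or_gt_of_ne (fun h : b = a => hxz (by rw [h])) with h | h
        · exact Or.inl h
        · exact Or.inr h
    | coe b =>
      induction z using OnePoint.rec with
      | infty =>
        rw [sbtw'_cci, sbtw'_cci]
        rcases lt_or_gt_of_ne (fun h : a = b => hxy (by rw [h])) with h | h
        · exact Or.inl h
        · exact Or.inr h
      | coe c =>
        rw [sbtw'_coe3, sbtw'_coe3]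
        have hab : a ≠ b := fun h => hxy (by rw [h])
        have hac : a ≠ c := fun h => hxz (by rw [h])
        have hbc : b ≠ c := fun h => hyz (by rw [h])
        rcases lt_or_gt_of_ne hab with h1 | h1 <;>
          rcases lt_or_gt_of_ne hac with h2 | h2 <;>
          rcases lt_or_gt_of_ne hbc with h3 | h3 <;> tauto

lemma sbtw'_asymm {x y z : RP1} (h : sbtw' x y z) : ¬ sbtw' y x z := by
  rcases h with ⟨a,b,c,ha,hb,hc,H⟩|⟨a,b,ha,hb,hc,H⟩|⟨a,b,ha,hb,hc,H⟩|⟨a,b,ha,hb,hc,H⟩ <;>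
    subst ha hb hc <;> intro h2
  · rw [sbtw'_coe3] at h2; rcases H with ⟨h1,h2'⟩|⟨h1,h2'⟩|⟨h1,h2'⟩ <;>
      rcases h2 with ⟨k1,k2⟩|⟨k1,k2⟩|⟨k1,k2⟩ <;> linarith
  · rw [sbtw'_cci] at h2; linarith
  · rw [sbtw'_icc] at h2; linarith
  · rw [sbtw'_cic] at h2; linarith

/-- The key openness lemma. -/
lemma sbtw'_open {R : Type*} [TopologicalSpace R]
    (f g h : R → RP1) (hf : Continuous f) (hg : Continuous g) (hh : Continuous h) :
    IsOpen {r : R | sbtw' (f r) (g r) (h r)} := by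
  -- core lemma 1: all-real, increasing pattern
  have core1 : ∀ (f g h : R → RP1), Continuous f → Continuous g → Continuous h →
      ∀ (r : R) (a b c : ℝ), f r = a → g r = b → h r = c → a < b → b < c →
      {s : R | sbtw' (f s) (g s) (h s)} ∈ nhds r := by
    intro f g h hf hg hh r a b c hfr hgr hhr h1 h2
    set m1 := (a + b) / 2 with hm1
    set m2 := (b + c) / 2 with hm2
    have hU : IsOpen (((↑) : ℝ → RP1) '' Set.Iio m1) := isOpen_image_coe.mpr isOpen_Iio
    have hV : IsOpen (((↑) : ℝ → RP1) '' Set.Ioo m1 m2) := isOpen_image_coe.mpr isOpen_Ioo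
    have hW : IsOpen (((↑) : ℝ → RP1) '' Set.Ioi m2) := isOpen_image_coe.mpr isOpen_Ioi
    have hfm : f r ∈ ((↑) : ℝ → RP1) '' Set.Iio m1 :=
      ⟨a, Set.mem_Iio.mpr (by rw [hm1]; linarith), hfr.symm⟩
    have hgm : g r ∈ ((↑) : ℝ → RP1) '' Set.Ioo m1 m2 :=
      ⟨b, Set.mem_Ioo.mpr ⟨by rw [hm1]; linarith, by rw [hm2]; linarith⟩, hgr.symm⟩
    have hhm : h r ∈ ((↑) : ℝ → RP1) '' Set.Ioi m2 :=
      ⟨c, Set.mem_Ioi.mpr (by rw [hm2]; linarith), hhr.symm⟩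
    refine Filter.mem_of_superset
      (Filter.inter_mem (hf.continuousAt.preimage_mem_nhds (hU.mem_nhds hfm))
        (Filter.inter_mem (hg.continuousAt.preimage_mem_nhds (hV.mem_nhds hgm))
          (hh.continuousAt.preimage_mem_nhds (hW.mem_nhds hhm)))) ?_
    rintro s ⟨⟨a', ha', hfs⟩, ⟨b', hb', hgs⟩, ⟨c', hc', hhs⟩⟩
    exact Or.inl ⟨a', b', c', hfs.symm, hgs.symm, hhs.symm,
      Or.inl ⟨lt_trans ha' hb'.1, lt_trans hb'.2 hc'⟩⟩
  -- core lemma 2: (a, b, ∞) pattern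
  have core2 : ∀ (f g h : R → RP1), Continuous f → Continuous g → Continuous h →
      ∀ (r : R) (a b : ℝ), f r = a → g r = b → h r = ∞ → a < b →
      {s : R | sbtw' (f s) (g s) (h s)} ∈ nhds r := by
    intro f g h hf hg hh r a b hfr hgr hhr hab
    set m := (a + b) / 2 with hm
    set L := a - 1 with hL
    set M := b + 1 with hM
    have hU : IsOpen (((↑) : ℝ → RP1) '' Set.Ioo L m) := isOpen_image_coe.mpr isOpen_Ioo
    have hV : IsOpen (((↑) : ℝ → RP1) '' Set.Ioo m M) := isOpen_image_coe.mpr isOpen_Ioo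
    have hW : IsOpen ((((↑) : ℝ → RP1) '' Set.Icc L M)ᶜ) :=
      isOpen_compl_image_coe.mpr ⟨isClosed_Icc, isCompact_Icc⟩
    have hfm : f r ∈ ((↑) : ℝ → RP1) '' Set.Ioo L m :=
      ⟨a, Set.mem_Ioo.mpr ⟨by rw [hL]; linarith, by rw [hm]; linarith⟩, hfr.symm⟩
    have hgm : g r ∈ ((↑) : ℝ → RP1) '' Set.Ioo m M :=
      ⟨b, Set.mem_Ioo.mpr ⟨by rw [hm]; linarith, by rw [hM]; linarith⟩, hgr.symm⟩
    have hhm : h r ∈ (((↑) : ℝ → RP1) '' Set.Icc L M)ᶜ := by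
      rw [hhr]; exact OnePoint.infty_notMem_image_coe
    refine Filter.mem_of_superset
      (Filter.inter_mem (hf.continuousAt.preimage_mem_nhds (hU.mem_nhds hfm))
        (Filter.inter_mem (hg.continuousAt.preimage_mem_nhds (hV.mem_nhds hgm))
          (hh.continuousAt.preimage_mem_nhds (hW.mem_nhds hhm)))) ?_
    rintro s ⟨⟨a', ha', hfs⟩, ⟨b', hb', hgs⟩, hhs⟩
    have hab' : a' < b' := lt_trans ha'.2 hb'.1
    rcases cases_RP1 (h s) with hz | ⟨c', hz⟩
    · exact Or.inr (Or.inl ⟨a', b', hfs.symm, hgs.symm, hz, hab'⟩)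
    · have : c' ∉ Set.Icc L M := by
        intro hc'
        exact hhs ⟨c', hc', hz.symm⟩
      rw [Set.mem_Icc, not_and_or, not_le, not_le] at this
      refine Or.inl ⟨a', b', c', hfs.symm, hgs.symm, hz, ?_⟩
      rcases this with hc | hc
      · exact Or.inr (Or.inr ⟨lt_trans hc ha'.1, hab'⟩)
      · exact Or.inl ⟨hab', lt_trans hb'.2 hc⟩
  rw [isOpen_iff_mem_nhds]
  intro r hr
  rcases hr with ⟨a,b,c,ha,hb,hc,⟨h1,h2⟩|⟨h1,h2⟩|⟨h1,h2⟩⟩|⟨a,b,ha,hb,hc,H⟩|⟨a,b,ha,hb,hc,H⟩|⟨a,b,ha,hb,hc,H⟩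
  · exact core1 f g h hf hg hh r a b c ha hb hc h1 h2
  · have := core1 g h f hg hh hf r b c a hb hc ha h1 h2
    have he : {s : R | sbtw' (g s) (h s) (f s)} = {s : R | sbtw' (f s) (g s) (h s)} := by
      ext s
      exact ⟨fun hs => sbtw'_rotate (sbtw'_rotate hs), fun hs => sbtw'_rotate hs⟩
    rwa [he] at this
  · have := core1 h f g hh hf hg r c a b hc ha hb h1 h2
    have he : {s : R | sbtw' (h s) (f s) (g s)} = {s : R | sbtw' (f s) (g s) (h s)} := by
      ext s
      exact ⟨fun hs => sbtw'_rotate hs, fun hs => sbtw'_rotate (sbtw'_rotate hs)⟩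
    rwa [he] at this
  · exact core2 f g h hf hg hh r a b ha hb hc H
  · have := core2 h f g hh hf hg r a b hc ha hb H
    have he : {s : R | sbtw' (h s) (f s) (g s)} = {s : R | sbtw' (f s) (g s) (h s)} := by
      ext s
      exact ⟨fun hs => sbtw'_rotate hs, fun hs => sbtw'_rotate (sbtw'_rotate hs)⟩
    rwa [he] at this
  · have := core2 g h f hg hh hf r a b hb hc ha H
    have he : {s : R | sbtw' (g s) (h s) (f s)} = {s : R | sbtw' (f s) (g s) (h s)} := by
      ext s
      exact ⟨fun hs => sbtw'_rotate (sbtw'_rotate hs), fun hs => sbtw'_rotate hs⟩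
    rwa [he] at this

/-- On a connected space, if `f, g, h : R → ℝP¹` are continuous with pairwise
disjoint graphs, then `{r | [f r, g r, h r]}` is empty or all of `R`. -/
theorem stmt4 {R : Type*} [TopologicalSpace R] [ConnectedSpace R]
    (f g h : R → RP1) (hf : Continuous f) (hg : Continuous g) (hh : Continuous h)
    (hfg : ∀ r, f r ≠ g r) (hfh : ∀ r, f r ≠ h r) (hgh : ∀ r, g r ≠ h r) :
    {r : R | sbtw' (f r) (g r) (h r)} = ∅ ∨
      {r : R | sbtw' (f r) (g r) (h r)} = Set.univ := by
  have hopen : IsOpen {r : R | sbtw' (f r) (g r) (h r)} := sbtw'_open f g h hf hg hh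
  have hopen2 : IsOpen {r : R | sbtw' (g r) (f r) (h r)} := sbtw'_open g f h hg hf hh
  have hcompl : {r : R | sbtw' (f r) (g r) (h r)}ᶜ = {r : R | sbtw' (g r) (f r) (h r)} := by
    ext r
    simp only [Set.mem_compl_iff, Set.mem_setOf_eq]
    constructor
    · intro hn
      rcases sbtw'_total (f r) (g r) (h r) (hfg r) (hfh r) (hgh r) with hs | hs
      · exact absurd hs hn
      · exact hs
    · intro hs hn
      exact sbtw'_asymm hn hs
  have hclopen : IsClopen {r : R | sbtw' (f r) (g r) (h r)} := by
    refine ⟨?_, hopen⟩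
    rw [← isOpen_compl_iff, hcompl]
    exact hopen2
  exact isClopen_iff.mp hclopen
end

section
/- Let R be a connected topological space, s ∈ R, and θ₁, θ₂, θ₃, θ₄ : R → ℝP¹ be continuous functions such that θ₁(s), θ₂(s), θ₃(s), θ₄(s) are in cyclic order [θ₁(s), θ₂(s), θ₃(s), θ₄(s)], and such that θ₁ ≠ θ₂, θ₂ ≠ θ₃, θ₃ ≠ θ₄, θ₄ ≠ θ₁ pointwise on all of R. Then [θ₁(r), θ₂(r), θ₃(r), θ₄(r)] holds for every r ∈ R; in particular θ₁(r) ≠ θ₃(r) and θ₂(r) ≠ θ₄(r) for all r ∈ R. -/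
/-!
The set of parameters `r` at which `[θ₁ r, θ₂ r, θ₃ r, θ₄ r]` holds is open, because the strict
cyclic order of `ℝP¹` is an open relation. It is also closed. Off this set, either two opposite
values coincide, say `θ₁ r = θ₃ r`: then a small arc around this value contains `θ₁` and `θ₃`
near `r`, while `θ₂` and `θ₄` stay in the complementary arc, so they cannot interleave. Or all
four values are distinct, and then some triple is cyclically reversed, which persists near `r`.
As `R` is connected and the set contains `s`, it is all of `R`.
-/

open OnePoint
/-- `[t₁,t₂,t₃,t₄]`: every subtriple in increasing index order is cyclically ordered. -/
def sbtw4 (t₁ t₂ t₃ t₄ : RP1) : Prop :=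
  sbtw' t₁ t₂ t₃ ∧ sbtw' t₁ t₂ t₄ ∧ sbtw' t₁ t₃ t₄ ∧ sbtw' t₂ t₃ t₄

open Set Filter Topology

section CircularOrder

variable {α : Type*} [CircularOrder α] {a b c d u v : α}

lemma ne_of_sbtw (h : sbtw a b c) : a ≠ c :=
  fun hac => sbtw_irrefl_left_right (hac ▸ h)

lemma sbtw_of_not_sbtw (hab : a ≠ b) (hbc : b ≠ c) (hac : a ≠ c) (h : ¬ sbtw a b c) :
    sbtw a c b := by
  rw [sbtw_iff_not_btw] at h ⊢
  intro hbca
  rcases btw_antisymm (btw_cyclic_left (btw_cyclic_left hbca)) (not_not.1 h) with h | h | h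
  exacts [hab h, hbc h, hac h.symm]

lemma sbtw_sbtw_rotate (habc : sbtw a b c) (hacd : sbtw a c d) : sbtw b c d ∧ sbtw b d a :=
  ⟨sbtw_cyclic_right (sbtw_trans_right (sbtw_cyclic_left hacd) (sbtw_cyclic_right habc)),
    sbtw_cyclic_left (sbtw_trans_right habc hacd)⟩

lemma not_sbtw_sbtw_of_mem_cIoo (ha : a ∈ cIoo u v) (hc : c ∈ cIoo u v)
    (hb : b ∈ cIoo v u) (hd : d ∈ cIoo v u) : ¬ (sbtw a b c ∧ sbtw a c d) := by
  rintro ⟨habc, hacd⟩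
  rw [mem_cIoo] at ha hc hb hd
  by_cases huac : sbtw u a c
  · exact sbtw_asymm (sbtw_trans_right (huac.trans_left habc) hc) hb
  · have huca := sbtw_of_not_sbtw (ne_of_sbtw (sbtw_cyclic_left ha)).symm (ne_of_sbtw habc)
      (ne_of_sbtw (sbtw_cyclic_left hc)).symm huac
    exact sbtw_asymm (sbtw_trans_right (huca.trans_left (sbtw_cyclic_left hacd)) ha) hd

end CircularOrder

namespace RP1

def toWithTop (x : RP1) : WithTop ℝ := x.elim ⊤ (↑)

@[simp] lemma toWithTop_infty : toWithTop ∞ = ⊤ := rfl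

@[simp] lemma toWithTop_coe (a : ℝ) : toWithTop a = a := rfl

lemma toWithTop_injective : Function.Injective toWithTop := by
  intro x y
  induction x using OnePoint.rec <;> induction y using OnePoint.rec <;> simp

attribute [local instance] LinearOrder.toCircularOrder in
/-- Sending `∞` to `⊤`, the cyclic order of `ℝP¹` is the one obtained by looping around the
linear order of `WithTop ℝ`. -/
instance : CircularOrder RP1 where
  btw x y z := btw (toWithTop x) (toWithTop y) (toWithTop z)
  sbtw x y z := sbtw (toWithTop x) (toWithTop y) (toWithTop z)
  btw_refl _ := btw_refl _
  btw_cyclic_left := btw_cyclic_left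
  sbtw_trans_left := sbtw_trans_left
  sbtw_iff_btw_not_btw := sbtw_iff_btw_not_btw
  btw_antisymm h h' := (btw_antisymm h h').imp toWithTop_injective.eq_iff.1
    (Or.imp (toWithTop_injective.eq_iff.1) (toWithTop_injective.eq_iff.1))
  btw_total _ _ _ := btw_total _ _ _

lemma sbtw_iff_toWithTop {x y z : RP1} :
    sbtw x y z ↔ let a := toWithTop x; let b := toWithTop y; let c := toWithTop z;
      a < b ∧ b < c ∨ b < c ∧ c < a ∨ c < a ∧ a < b := Iff.rfl

lemma sbtw'_iff_sbtw {x y z : RP1} : sbtw' x y z ↔ sbtw x y z := by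
  induction x using OnePoint.rec <;> induction y using OnePoint.rec <;>
    induction z using OnePoint.rec <;> simp [sbtw', sbtw_iff_toWithTop]

lemma eventually_sbtw_coe {a b c : ℝ} (h : sbtw (a : RP1) b c) :
    ∀ᶠ p in 𝓝 ((a : RP1), (b : RP1), (c : RP1)), sbtw p.1 p.2.1 p.2.2 := by
  have hE : IsOpenEmbedding
      (Prod.map ((↑) : ℝ → RP1) (Prod.map ((↑) : ℝ → RP1) ((↑) : ℝ → RP1))) :=
    isOpenEmbedding_coe.prodMap (isOpenEmbedding_coe.prodMap isOpenEmbedding_coe)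
  have hO : IsOpen {q : ℝ × ℝ × ℝ | sbtw (q.1 : RP1) q.2.1 q.2.2} := by
    simp only [sbtw_iff_toWithTop, toWithTop_coe, WithTop.coe_lt_coe, ofPred_or, ofPred_and]
    refine .union (.inter ?_ ?_) (.union (.inter ?_ ?_) (.inter ?_ ?_)) <;>
      exact isOpen_lt (by fun_prop) (by fun_prop)
  exact (hE.map_nhds_eq (a, b, c)).symm ▸ eventually_map.2 (hO.mem_nhds h)

lemma eventually_sbtw_coe_coe_infty {a b : ℝ} (h : a < b) :
    ∀ᶠ p in 𝓝 ((a : RP1), (b : RP1), ∞), sbtw p.1 p.2.1 p.2.2 := by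
  have ha : ∀ᶠ x in 𝓝 (a : RP1), x ∈ ((↑) '' Ioo (a - 1) ((a + b) / 2) : Set RP1) :=
    (isOpen_image_coe.2 isOpen_Ioo).mem_nhds ⟨a, ⟨by linarith, by linarith⟩, rfl⟩
  have hb : ∀ᶠ y in 𝓝 (b : RP1), y ∈ ((↑) '' Ioo ((a + b) / 2) (b + 1) : Set RP1) :=
    (isOpen_image_coe.2 isOpen_Ioo).mem_nhds ⟨b, ⟨by linarith, by linarith⟩, rfl⟩
  have hinf : ∀ᶠ z in 𝓝 (∞ : RP1), z ∉ ((↑) '' Icc (a - 1) (b + 1) : Set RP1) :=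
    (isOpen_compl_image_coe.2 ⟨isClosed_Icc, isCompact_Icc⟩).mem_nhds infty_notMem_image_coe
  filter_upwards [ha.prodMk_nhds (hb.prodMk_nhds hinf)]
  rintro ⟨_, _, z⟩ ⟨⟨s, hs, rfl⟩, ⟨t, ht, rfl⟩, hz⟩
  induction z using OnePoint.rec with
  | infty => simpa [sbtw_iff_toWithTop] using hs.2.trans ht.1
  | coe c =>
    have hc : c < a - 1 ∨ b + 1 < c := by
      by_contra! hc
      exact hz ⟨c, hc, rfl⟩
    simp only [mem_Ioo] at hs ht
    simp only [sbtw_iff_toWithTop, toWithTop_coe, WithTop.coe_lt_coe]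
    rcases hc with hc | hc
    · exact .inr <| .inr ⟨by linarith, by linarith⟩
    · exact .inl ⟨by linarith, by linarith⟩

lemma eventually_sbtw_of_rotate {x y z : RP1}
    (h : ∀ᶠ p in 𝓝 (y, z, x), sbtw p.1 p.2.1 p.2.2) :
    ∀ᶠ p in 𝓝 (x, y, z), sbtw p.1 p.2.1 p.2.2 := by
  have hrot : Continuous fun p : RP1 × RP1 × RP1 => (p.2.1, p.2.2, p.1) := by fun_prop
  exact ((hrot.tendsto (x, y, z)).eventually h).mono fun p hp => sbtw_cyclic_right hp

lemma isOpen_setOf_sbtw : IsOpen {p : RP1 × RP1 × RP1 | sbtw p.1 p.2.1 p.2.2} := by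
  refine isOpen_iff_eventually.2 ?_
  rintro ⟨x, y, z⟩ h
  rcases sbtw'_iff_sbtw.2 h with ⟨a, b, c, rfl, rfl, rfl, -⟩ | ⟨a, b, rfl, rfl, rfl, hab⟩ |
    ⟨a, b, rfl, rfl, rfl, hab⟩ | ⟨a, b, rfl, rfl, rfl, hab⟩
  · exact eventually_sbtw_coe h
  · exact eventually_sbtw_coe_coe_infty hab
  · exact eventually_sbtw_of_rotate <| eventually_sbtw_of_rotate <|
      eventually_sbtw_coe_coe_infty hab
  · exact eventually_sbtw_of_rotate (eventually_sbtw_coe_coe_infty hab)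

lemma exists_mem_cIoo_cIcc_subset {p : RP1} {U : Set RP1} (hU : U ∈ 𝓝 p) :
    ∃ u v, p ∈ cIoo u v ∧ cIcc u v ⊆ U := by
  simp only [← compl_cIoo, compl_subset_comm, mem_cIoo]
  induction p using OnePoint.rec with
  | infty =>
    have hU' : (↑) ⁻¹' U ∈ (atBot ⊔ atTop : Filter ℝ) := by
      rw [← cocompact_eq_atBot_atTop, ← coclosedCompact_eq_cocompact, ← comap_coe_nhds_infty]
      exact preimage_mem_comap hU
    obtain ⟨⟨B, hB⟩, ⟨A, hA⟩⟩ := (mem_sup.1 hU').imp mem_atBot_sets.1 mem_atTop_sets.1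
    refine ⟨((max A (B + 1) : ℝ) : RP1), (B : RP1), ?_, fun y hy => ?_⟩
    · exact .inr <| .inr ⟨WithTop.coe_lt_coe.2 <| (lt_add_one B).trans_le (le_max_right _ _),
        WithTop.coe_lt_top _⟩
    · induction y using OnePoint.rec with
      | infty => exact absurd (mem_of_mem_nhds hU) hy
      | coe t =>
        have hBt : B < t := lt_of_not_ge fun h => hy (hB t h)
        have htA : t < A := lt_of_not_ge fun h => hy (hA t h)
        simp only [mem_cIoo, sbtw_iff_toWithTop, toWithTop_coe, WithTop.coe_lt_coe]
        exact .inl ⟨hBt, htA.trans_le (le_max_left _ _)⟩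
  | coe p =>
    obtain ⟨l, r, ⟨hl, hr⟩, hlr⟩ := mem_nhds_iff_exists_Ioo_subset.1
      (continuous_coe.continuousAt.preimage_mem_nhds hU)
    refine ⟨(((l + p) / 2 : ℝ) : RP1), (((p + r) / 2 : ℝ) : RP1), ?_, fun y hy => ?_⟩
    · simp only [sbtw_iff_toWithTop, toWithTop_coe, WithTop.coe_lt_coe]
      exact .inl ⟨by linarith, by linarith⟩
    · induction y using OnePoint.rec with
      | infty => simpa [sbtw_iff_toWithTop] using (by linarith : (l + p) / 2 < (p + r) / 2)
      | coe t =>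
        have ht : t ≤ l ∨ r ≤ t := by
          by_contra! ht
          exact hy (hlr ht)
        simp only [mem_cIoo, sbtw_iff_toWithTop, toWithTop_coe, WithTop.coe_lt_coe]
        rcases ht with ht | ht
        · exact .inr <| .inl ⟨by linarith, by linarith⟩
        · exact .inr <| .inr ⟨by linarith, by linarith⟩

lemma isOpen_cIoo (u v : RP1) : IsOpen (cIoo u v) :=
  isOpen_setOf_sbtw.preimage (by fun_prop : Continuous fun x : RP1 => (u, x, v))

lemma sbtw4_iff {a b c d : RP1} : sbtw4 a b c d ↔ sbtw a b c ∧ sbtw a c d := by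
  simp only [sbtw4, sbtw'_iff_sbtw]
  refine ⟨fun h => ⟨h.1, h.2.2.1⟩, fun ⟨habc, hacd⟩ => ?_⟩
  exact ⟨habc, sbtw_trans_right habc hacd, hacd, (sbtw_sbtw_rotate habc hacd).1⟩

section Continuous

variable {X : Type*} [TopologicalSpace X] {f g h k : X → RP1}

lemma isOpen_sbtw (hf : Continuous f) (hg : Continuous g) (hh : Continuous h) :
    IsOpen {x | sbtw (f x) (g x) (h x)} :=
  isOpen_setOf_sbtw.preimage (hf.prodMk (hg.prodMk hh))

lemma eventually_not_sbtw_sbtw (hf : Continuous f) (hg : Continuous g) (hh : Continuous h)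
    (hk : Continuous k) {x : X} (hfh : f x = h x) (hgf : g x ≠ f x) (hkf : k x ≠ f x) :
    ∀ᶠ y in 𝓝 x, ¬ (sbtw (f y) (g y) (h y) ∧ sbtw (f y) (h y) (k y)) := by
  obtain ⟨u, v, hfx, huv⟩ := exists_mem_cIoo_cIcc_subset
    (inter_mem (compl_singleton_mem_nhds hgf.symm) (compl_singleton_mem_nhds hkf.symm))
  have hgx : g x ∈ cIoo v u := by
    rw [← compl_cIcc]
    exact fun hg' => (huv hg').1 rfl
  have hkx : k x ∈ cIoo v u := by
    rw [← compl_cIcc]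
    exact fun hk' => (huv hk').2 rfl
  filter_upwards [hf.continuousAt.preimage_mem_nhds ((isOpen_cIoo u v).mem_nhds hfx),
    hg.continuousAt.preimage_mem_nhds ((isOpen_cIoo v u).mem_nhds hgx),
    hh.continuousAt.preimage_mem_nhds ((isOpen_cIoo u v).mem_nhds (hfh ▸ hfx)),
    hk.continuousAt.preimage_mem_nhds ((isOpen_cIoo v u).mem_nhds hkx)] with y hfy hgy hhy hky
  exact not_sbtw_sbtw_of_mem_cIoo hfy hhy hgy hky

lemma isOpen_sbtw4 (hf : Continuous f) (hg : Continuous g) (hh : Continuous h)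
    (hk : Continuous k) : IsOpen {x | sbtw4 (f x) (g x) (h x) (k x)} := by
  simp only [sbtw4_iff, ofPred_and]
  exact (isOpen_sbtw hf hg hh).inter (isOpen_sbtw hf hh hk)

lemma isClosed_sbtw4 (hf : Continuous f) (hg : Continuous g) (hh : Continuous h)
    (hk : Continuous k) (hfg : ∀ x, f x ≠ g x) (hgh : ∀ x, g x ≠ h x) (hhk : ∀ x, h x ≠ k x)
    (hkf : ∀ x, k x ≠ f x) : IsClosed {x | sbtw4 (f x) (g x) (h x) (k x)} := by
  refine isOpen_compl_iff.1 (isOpen_iff_eventually.2 fun x hx => ?_)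
  simp only [mem_compl_iff, mem_ofPred_eq, sbtw4_iff] at hx ⊢
  by_cases hfh : f x = h x
  · exact eventually_not_sbtw_sbtw hf hg hh hk hfh (hfg x).symm (hkf x)
  by_cases hgk : g x = k x
  · filter_upwards [eventually_not_sbtw_sbtw hg hh hk hf hgk (hgh x).symm (hfg x)] with y hy hc
    exact hy (sbtw_sbtw_rotate hc.1 hc.2)
  rcases not_and_or.1 hx with hfgh | hfhk
  · have hfhg := sbtw_of_not_sbtw (hfg x) (hgh x) hfh hfgh
    filter_upwards [(isOpen_sbtw hf hh hg).mem_nhds hfhg] with y hy hc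
    exact sbtw_asymm hc.1 (sbtw_cyclic_left hy)
  · have hfkh := sbtw_of_not_sbtw hfh (hhk x) (hkf x).symm hfhk
    filter_upwards [(isOpen_sbtw hf hk hh).mem_nhds hfkh] with y hy hc
    exact sbtw_asymm hc.2 (sbtw_cyclic_left hy)

end Continuous

end RP1

/-- Transitive projective root "ordering": if four continuous functions into `ℝP¹`
are cyclically ordered at a sample point `s` and the cyclically consecutive ones never
meet, then they are cyclically ordered everywhere; in particular `θ₁ ≠ θ₃` and
`θ₂ ≠ θ₄` pointwise. -/
theorem stmt5 {R : Type*} [TopologicalSpace R] [ConnectedSpace R] (s : R)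
    (θ₁ θ₂ θ₃ θ₄ : R → RP1)
    (h₁ : Continuous θ₁) (h₂ : Continuous θ₂) (h₃ : Continuous θ₃) (h₄ : Continuous θ₄)
    (hs : sbtw4 (θ₁ s) (θ₂ s) (θ₃ s) (θ₄ s))
    (h12 : ∀ r, θ₁ r ≠ θ₂ r) (h23 : ∀ r, θ₂ r ≠ θ₃ r)
    (h34 : ∀ r, θ₃ r ≠ θ₄ r) (h41 : ∀ r, θ₄ r ≠ θ₁ r) :
    ∀ r, sbtw4 (θ₁ r) (θ₂ r) (θ₃ r) (θ₄ r) ∧ θ₁ r ≠ θ₃ r ∧ θ₂ r ≠ θ₄ r := by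
  have hS : {r | sbtw4 (θ₁ r) (θ₂ r) (θ₃ r) (θ₄ r)} = univ :=
    IsClopen.eq_univ ⟨RP1.isClosed_sbtw4 h₁ h₂ h₃ h₄ h12 h23 h34 h41,
      RP1.isOpen_sbtw4 h₁ h₂ h₃ h₄⟩ ⟨s, hs⟩
  intro r
  have hr : sbtw4 (θ₁ r) (θ₂ r) (θ₃ r) (θ₄ r) := eq_univ_iff_forall.1 hS r
  obtain ⟨h123, h134⟩ := RP1.sbtw4_iff.1 hr
  exact ⟨hr, ne_of_sbtw h123, ne_of_sbtw (sbtw_sbtw_rotate h123 h134).1⟩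
end

section
/- The sum of the multiplicities of all projective roots in ℝP¹ of a nonzero real polynomial p with respect to a degree bound d ≥ deg(p) equals d minus the number (with multiplicity) of non-real complex roots of p; in particular, if p splits over ℝ, this sum equals d. -/
open scoped Classical

open Polynomial

theorem Complex.mem_range_algebraMap_iff {z : ℂ} : z ∈ (algebraMap ℝ ℂ).range ↔ z.im = 0 :=
  ⟨by rintro ⟨x, rfl⟩; simp, fun hz => ⟨z.re, Complex.ext (by simp) (by simp [hz])⟩⟩

theorem card_roots_add_card_nonreal_roots (p : ℝ[X]) :
    Multiset.card p.roots +
        Multiset.card ((p.map (algebraMap ℝ ℂ)).roots.filter fun z => z.im ≠ 0) =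
      p.natDegree := by
  have hreal : (p.map (algebraMap ℝ ℂ)).roots.filter (fun z => z.im = 0) =
      p.roots.map (algebraMap ℝ ℂ) := by
    rw [← filter_roots_map_range_eq_map_roots (algebraMap ℝ ℂ).injective]
    exact Multiset.filter_congr fun z _ => Complex.mem_range_algebraMap_iff.symm
  calc Multiset.card p.roots +
        Multiset.card ((p.map (algebraMap ℝ ℂ)).roots.filter fun z => z.im ≠ 0)
      = Multiset.card (p.map (algebraMap ℝ ℂ)).roots := by
        rw [← p.roots.card_map (algebraMap ℝ ℂ), ← hreal, ← Multiset.card_add,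
          Multiset.filter_add_not]
    _ = p.natDegree := by
        rw [← (IsAlgClosed.splits _).natDegree_eq_card_roots, natDegree_map]

theorem stmt7_general (p : Polynomial ℝ) (d : ℕ) (hd : p.natDegree ≤ d) :
    (Multiset.card p.roots + (d - p.natDegree) =
      d - Multiset.card (((p.map (algebraMap ℝ ℂ)).roots).filter fun z => z.im ≠ 0)) ∧
    (Polynomial.Splits (p.map (RingHom.id ℝ)) →
      Multiset.card p.roots + (d - p.natDegree) = d) := by
  have hcard := card_roots_add_card_nonreal_roots p
  refine ⟨by omega, fun hsplit => ?_⟩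
  have hroots : Multiset.card p.roots = p.natDegree := by
    simpa using splits_iff_card_roots.mp hsplit
  omega

/-- The sum of the multiplicities of all projective roots in `ℝP¹` of a nonzero real
polynomial `p` with respect to a degree bound `d ≥ deg p` (the real roots contribute
their usual multiplicities, the point at infinity contributes `d - deg p`) equals `d`
minus the number, with multiplicity, of non-real complex roots of `p`; in particular,
if `p` splits over `ℝ`, this sum equals `d`. -/
theorem stmt7 (p : Polynomial ℝ) (hp : p ≠ 0) (d : ℕ) (hd : p.natDegree ≤ d) :
    (Multiset.card p.roots + (d - p.natDegree) =
      d - Multiset.card (((p.map (algebraMap ℝ ℂ)).roots).filter fun z => z.im ≠ 0)) ∧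
    (Polynomial.Splits (p.map (RingHom.id ℝ)) →
      Multiset.card p.roots + (d - p.natDegree) = d) :=
  stmt7_general p d hd
end

section
/- Let R be a connected topological space, s ∈ R, let θ_ℓ, θ_u : R → ℝ ⊆ ℝP¹ be continuous with θ_ℓ < θ_u pointwise, and let θ : R → ℝP¹ be continuous with θ(r) ≠ θ_ℓ(r) and θ(r) ≠ θ_u(r) for all r ∈ R, and with [θ_ℓ(s), θ_u(s), θ(s)] in the cyclic order. Then for every r ∈ R, θ(r) does not lie in the open real interval (θ_ℓ(r), θ_u(r)). -/
open OnePoint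
open Set Filter Topology

/-- If `θ` avoids the continuous real-valued bounds `θ_ℓ < θ_u` everywhere and
`[θ_ℓ(s), θ_u(s), θ(s)]` at a sample point, then `θ(r)` never lies in the open
interval `(θ_ℓ(r), θ_u(r))`. -/
theorem stmt10 {R : Type*} [TopologicalSpace R] [ConnectedSpace R] (s : R)
    (θℓ θu : R → ℝ) (θ : R → RP1)
    (hθℓ : Continuous θℓ) (hθu : Continuous θu) (hθ : Continuous θ)
    (hlt : ∀ r, θℓ r < θu r)
    (hne_l : ∀ r, θ r ≠ (θℓ r : RP1)) (hne_u : ∀ r, θ r ≠ (θu r : RP1))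
    (hcyc : sbtw' ((θℓ s : RP1)) ((θu s : RP1)) (θ s)) :
    ∀ r, ∀ t : ℝ, θ r = (t : RP1) → ¬ (θℓ r < t ∧ t < θu r) := by
  set U : Set R := {r | ∃ t : ℝ, θ r = (t : RP1) ∧ θℓ r < t ∧ t < θu r} with hUdef
  set V : Set R := {r | θ r ∉ (fun x : ℝ => (x : RP1)) '' Icc (θℓ r) (θu r)} with hVdef
  have hdisj : ∀ r, r ∈ U → r ∉ V := by
    rintro r ⟨t, hrt, h1, h2⟩ hv
    exact hv ⟨t, ⟨h1.le, h2.le⟩, hrt.symm⟩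
  have hcover : ∀ r, r ∈ U ∨ r ∈ V := by
    intro r
    cases hx : θ r with
    | none =>
        right
        rintro ⟨t, _, ht⟩
        rw [hx] at ht
        exact OnePoint.infty_ne_coe t ht.symm
    | some t =>
        by_cases hmem : θℓ r < t ∧ t < θu r
        · exact Or.inl ⟨t, hx, hmem.1, hmem.2⟩
        · right
          rintro ⟨t', ht', hco⟩
          rw [hx] at hco
          have : t' = t := OnePoint.coe_eq_coe.mp hco
          subst this
          rcases lt_or_eq_of_le ht'.1 with h1 | h1
          · rcases lt_or_eq_of_le ht'.2 with h2 | h2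
            · exact hmem ⟨h1, h2⟩
            · exact hne_u r (by rw [hx, h2]; rfl)
          · exact hne_l r (by rw [hx, ← h1]; rfl)
  have hopenU : IsOpen U := by
    rw [isOpen_iff_mem_nhds]
    rintro r ⟨t, hrt, h1, h2⟩
    set a' := (θℓ r + t) / 2 with ha'def
    set b' := (t + θu r) / 2 with hb'def
    have ha1 : θℓ r < a' := by simp [ha'def]; linarith
    have ha2 : a' < t := by simp [ha'def]; linarith
    have hb1 : t < b' := by simp [hb'def]; linarith
    have hb2 : b' < θu r := by simp [hb'def]; linarith
    have hO : IsOpen ((fun x : ℝ => (x : RP1)) '' Ioo a' b') :=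
      OnePoint.isOpenMap_coe _ isOpen_Ioo
    have hmemO : θ r ∈ (fun x : ℝ => (x : RP1)) '' Ioo a' b' :=
      ⟨t, ⟨ha2, hb1⟩, hrt.symm⟩
    filter_upwards [hθ.continuousAt.preimage_mem_nhds (hO.mem_nhds hmemO),
      (hθℓ.tendsto r).eventually (eventually_lt_nhds ha1),
      (hθu.tendsto r).eventually (eventually_gt_nhds hb2)] with r' hθ' hℓ' hu'
    obtain ⟨t', ht', hco⟩ := hθ'
    exact ⟨t', hco.symm, hℓ'.trans ht'.1, ht'.2.trans hu'⟩
  have hopenV : IsOpen V := by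
    rw [isOpen_iff_mem_nhds]
    intro r hv
    cases hx : θ r with
    | none =>
        have hcl : IsClosed ((fun x : ℝ => (x : RP1)) '' Icc (θℓ r - 1) (θu r + 1)) :=
          ((isCompact_Icc).image OnePoint.continuous_coe).isClosed
        have hmemO : θ r ∈ ((fun x : ℝ => (x : RP1)) '' Icc (θℓ r - 1) (θu r + 1))ᶜ := by
          rw [hx]
          rintro ⟨t, _, ht⟩
          exact OnePoint.infty_ne_coe t ht.symm
        filter_upwards [hθ.continuousAt.preimage_mem_nhds
            (hcl.isOpen_compl.mem_nhds hmemO),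
          (hθℓ.tendsto r).eventually (eventually_gt_nhds (by linarith : θℓ r - 1 < θℓ r)),
          (hθu.tendsto r).eventually (eventually_lt_nhds (by linarith : θu r < θu r + 1))]
          with r' hθ' hℓ' hu'
        rintro ⟨t, ht, hco⟩
        exact hθ' ⟨t, ⟨by linarith [ht.1], by linarith [ht.2]⟩, hco⟩
    | some t =>
        have htIcc : t ∉ Icc (θℓ r) (θu r) := by
          intro h
          exact hv ⟨t, h, hx.symm⟩
        rw [mem_Icc, not_and_or, not_le, not_le] at htIcc
        rcases htIcc with h | h
        · set m := (t + θℓ r) / 2 with hmdef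
          have hm1 : t < m := by simp [hmdef]; linarith
          have hm2 : m < θℓ r := by simp [hmdef]; linarith
          have hO : IsOpen ((fun x : ℝ => (x : RP1)) '' Iio m) :=
            OnePoint.isOpenMap_coe _ isOpen_Iio
          have hmemO : θ r ∈ (fun x : ℝ => (x : RP1)) '' Iio m := ⟨t, hm1, hx.symm⟩
          filter_upwards [hθ.continuousAt.preimage_mem_nhds (hO.mem_nhds hmemO),
            (hθℓ.tendsto r).eventually (eventually_gt_nhds hm2)] with r' hθ' hℓ'
          rintro ⟨t', ht', hco⟩
          obtain ⟨t'', ht'', hco'⟩ := hθ'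
          rw [← hco] at hco'
          have : t'' = t' := OnePoint.coe_eq_coe.mp hco'
          subst this
          exact absurd ht'.1 (not_le.mpr (ht''.trans hℓ'))
        · set m := (θu r + t) / 2 with hmdef
          have hm1 : θu r < m := by simp [hmdef]; linarith
          have hm2 : m < t := by simp [hmdef]; linarith
          have hO : IsOpen ((fun x : ℝ => (x : RP1)) '' Ioi m) :=
            OnePoint.isOpenMap_coe _ isOpen_Ioi
          have hmemO : θ r ∈ (fun x : ℝ => (x : RP1)) '' Ioi m := ⟨t, hm2, hx.symm⟩
          filter_upwards [hθ.continuousAt.preimage_mem_nhds (hO.mem_nhds hmemO),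
            (hθu.tendsto r).eventually (eventually_lt_nhds hm1)] with r' hθ' hu'
          rintro ⟨t', ht', hco⟩
          obtain ⟨t'', ht'', hco'⟩ := hθ'
          rw [← hco] at hco'
          have : t'' = t' := OnePoint.coe_eq_coe.mp hco'
          subst this
          exact absurd ht'.2 (not_le.mpr (hu'.trans ht''))
  have hVcompl : Uᶜ = V :=
    Set.ext fun r => ⟨fun h => (hcover r).resolve_left h, fun hv hu => hdisj r hu hv⟩
  have hclopen : IsClopen U :=
    ⟨isOpen_compl_iff.mp (hVcompl ▸ hopenV), hopenU⟩
  have hsV : s ∈ V := by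
    rcases hcyc with ⟨a, b, c, hx, hy, hz, hor⟩ | ⟨a, b, hx, hy, hz, hab⟩ |
      ⟨a, b, hx, hy, hz, hab⟩ | ⟨a, b, hx, hy, hz, hab⟩
    · have ha : θℓ s = a := OnePoint.coe_eq_coe.mp hx
      have hb : θu s = b := OnePoint.coe_eq_coe.mp hy
      rintro ⟨t, ht, hco⟩
      rw [hz] at hco
      have htc : t = c := OnePoint.coe_eq_coe.mp hco
      subst htc; subst ha; subst hb
      have hab : θℓ s < θu s := hlt s
      rcases hor with ⟨_, h2⟩ | ⟨h1, h2⟩ | ⟨h1, _⟩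
      · exact absurd ht.2 (not_le.mpr h2)
      · exact absurd (h1.trans h2) (lt_asymm hab)
      · exact absurd ht.1 (not_le.mpr h1)
    · rintro ⟨t, _, hco⟩
      rw [hz] at hco
      exact OnePoint.infty_ne_coe t hco.symm
    · exact absurd hy.symm (OnePoint.infty_ne_coe _)
    · exact absurd hx.symm (OnePoint.infty_ne_coe _)
  have hUempty : U = ∅ := by
    rcases isClopen_iff.mp hclopen with h | h
    · exact h
    · exact absurd (h ▸ mem_univ s : s ∈ U) fun hu => hdisj s hu hsV
  intro r t hrt ⟨h1, h2⟩
  have : r ∈ U := ⟨t, hrt, h1, h2⟩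
  rw [hUempty] at this
  exact this
end

section
/- Let R be a connected topological space and p ∈ ℝ[x₁,…,x_{i+1}] of level i+1, projectively delineable on R. If additionally the leading coefficient of p with respect to x_{i+1} is sign-invariant and nonzero on R, then p is delineable on R: every projective root function of p on R is either identically ∞ on R (impossible here) or never equal to ∞ on R, the real-valued ones take values in ℝ and are strictly ordered, and they describe exactly the real roots of p(r, x_{i+1}) with constant multiplicities. -/
open OnePoint Polynomial

noncomputable section

/-- `t ∈ ℝP¹` is a projective root of the univariate real polynomial `q` with
respect to the degree bound `d`: a real point is a usual real root, and the point
at infinity is a root iff the degree of `q` drops below `d` (or `q = 0`). -/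
def IsProjRoot (d : ℕ) (q : Polynomial ℝ) (t : RP1) : Prop :=
  (∃ a : ℝ, t = (a : RP1) ∧ q.IsRoot a) ∨ (t = ∞ ∧ (q = 0 ∨ q.natDegree < d))

/-- Multiplicity of `t ∈ ℝP¹` as a projective root of `q` with respect to `d`:
the usual root multiplicity for real points, and `d − deg q` at infinity. -/
def projMult (d : ℕ) (q : Polynomial ℝ) (t : RP1) : ℕ :=
  Option.casesOn (show Option ℝ from t) (d - q.natDegree) fun a => q.rootMultiplicity a

/-- Evaluation of `p ∈ ℝ[x₁,…,xᵢ][x_{i+1}]` at `r ∈ ℝⁱ` in the first `i` variables,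
yielding a univariate real polynomial in `x_{i+1}`. -/
def evalAt {i : ℕ} (p : Polynomial (MvPolynomial (Fin i) ℝ)) (r : Fin i → ℝ) :
    Polynomial ℝ :=
  p.map (MvPolynomial.eval r)

/-- `p` is projectively delineable on `R ⊆ ℝⁱ` via the projective root functions
`θ₁,…,θ_k : R → ℝP¹`: they are continuous on `R`, pointwise pairwise distinct, their
values at each `r ∈ R` are exactly the projective roots of `p(r, x_{i+1})` with
respect to `d = deg_{x_{i+1}} p`, and their multiplicities are constant in `r`. -/
def ProjDelineableWith {i : ℕ} (R : Set (Fin i → ℝ))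
    (p : Polynomial (MvPolynomial (Fin i) ℝ)) {k : ℕ}
    (θ : Fin k → (Fin i → ℝ) → RP1) : Prop :=
  (∀ j, ContinuousOn (θ j) R) ∧
  (∀ r ∈ R, Function.Injective fun j => θ j r) ∧
  (∀ r ∈ R, ∀ t : RP1, IsProjRoot p.natDegree (evalAt p r) t ↔ ∃ j, θ j r = t) ∧
  (∀ j, ∃ m : ℕ, 0 < m ∧ ∀ r ∈ R, projMult p.natDegree (evalAt p r) (θ j r) = m)

/-- `p` is delineable on `R ⊆ ℝⁱ` via the real root functions `θ₁ < ⋯ < θ_k`: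
continuous on `R`, strictly ordered at each point, describing exactly the real roots
of `p(r, x_{i+1})`, with multiplicities constant in `r`. -/
def DelineableWith {i : ℕ} (R : Set (Fin i → ℝ))
    (p : Polynomial (MvPolynomial (Fin i) ℝ)) {k : ℕ}
    (θ : Fin k → (Fin i → ℝ) → ℝ) : Prop :=
  (∀ j, ContinuousOn (θ j) R) ∧
  (∀ r ∈ R, StrictMono fun j => θ j r) ∧
  (∀ r ∈ R, ∀ t : ℝ, (evalAt p r).IsRoot t ↔ ∃ j, θ j r = t) ∧
  (∀ j, ∃ m : ℕ, 0 < m ∧ ∀ r ∈ R, (evalAt p r).rootMultiplicity (θ j r) = m)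

/-- `p` is delineable on `R`. -/
def Delineable {i : ℕ} (R : Set (Fin i → ℝ))
    (p : Polynomial (MvPolynomial (Fin i) ℝ)) : Prop :=
  ∃ (k : ℕ) (θ : Fin k → (Fin i → ℝ) → ℝ), DelineableWith R p θ

/-- The real part of a point of `ℝP¹`, sending `∞` to `0`. -/
def toR (t : RP1) : ℝ := Option.casesOn (show Option ℝ from t) 0 id

lemma coe_toR {t : RP1} (h : t ≠ ∞) : ((toR t : ℝ) : RP1) = t := by
  cases t with
  | none => exact absurd rfl h
  | some a => rfl

/-- Two continuous functions to `ℝ` that never agree on a preconnected set have a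
constant order relation on it. -/
lemma sign_const {X : Type*} [TopologicalSpace X] {R : Set X} (hR : IsPreconnected R)
    {f g : X → ℝ} (hf : ContinuousOn f R) (hg : ContinuousOn g R)
    (hne : ∀ r ∈ R, f r ≠ g r) :
    (∀ r ∈ R, f r < g r) ∨ (∀ r ∈ R, g r < f r) := by
  by_contra hcon
  push_neg at hcon
  obtain ⟨⟨a, ha, hfa⟩, ⟨b, hb, hgb⟩⟩ := hcon
  obtain ⟨x, hx, hfx⟩ := hR.intermediate_value₂ hb ha hf hg hgb hfa
  exact hne x hx hfx

/-- If `p` of level `i+1` is projectively delineable on a connected `R` and its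
leading coefficient in `x_{i+1}` is sign-invariant and nonzero on `R`, then no
projective root function ever takes the value `∞` on `R`, and `p` is delineable
on `R`. -/

theorem stmt15 {i : ℕ} (R : Set (Fin i → ℝ)) (hR : IsConnected R)
    (p : Polynomial (MvPolynomial (Fin i) ℝ)) (hdeg : 0 < p.natDegree)
    {k : ℕ} (θ : Fin k → (Fin i → ℝ) → RP1) (hpd : ProjDelineableWith R p θ)
    (hlc : (∀ r ∈ R, 0 < MvPolynomial.eval r p.leadingCoeff) ∨
           (∀ r ∈ R, MvPolynomial.eval r p.leadingCoeff < 0)) :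
    (∀ j, ∀ r ∈ R, θ j r ≠ ∞) ∧ Delineable R p := by
  obtain ⟨hcont, hinj, hroots, hmult⟩ := hpd
  have hlc' : ∀ r ∈ R, MvPolynomial.eval r p.leadingCoeff ≠ 0 := by
    rcases hlc with h | h
    · exact fun r hr => ne_of_gt (h r hr)
    · exact fun r hr => ne_of_lt (h r hr)
  have hdegEq : ∀ r ∈ R, (evalAt p r).natDegree = p.natDegree := fun r hr =>
    Polynomial.natDegree_map_of_leadingCoeff_ne_zero _ (hlc' r hr)
  have hne0 : ∀ r ∈ R, evalAt p r ≠ 0 := by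
    intro r hr h0
    have h1 := hdegEq r hr
    rw [h0, Polynomial.natDegree_zero] at h1
    omega
  have hNoInf : ∀ j, ∀ r ∈ R, θ j r ≠ ∞ := by
    intro j r hr h
    have hp : IsProjRoot p.natDegree (evalAt p r) ∞ := (hroots r hr ∞).2 ⟨j, h⟩
    rcases hp with ⟨a, ha, _⟩ | ⟨_, h0 | hlt⟩
    · exact OnePoint.coe_ne_infty a ha.symm
    · exact hne0 r hr h0
    · rw [hdegEq r hr] at hlt; omega
  refine ⟨hNoInf, ?_⟩
  set φ : Fin k → (Fin i → ℝ) → ℝ := fun j r => toR (θ j r) with hφ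
  have hθφ : ∀ j, ∀ r ∈ R, θ j r = ((φ j r : ℝ) : RP1) := fun j r hr =>
    (coe_toR (hNoInf j r hr)).symm
  have hφcont : ∀ j, ContinuousOn (φ j) R := by
    intro j
    rw [OnePoint.isOpenEmbedding_coe.toIsInducing.continuousOn_iff]
    exact (hcont j).congr fun r hr => (hθφ j r hr).symm
  have hφinj : ∀ r ∈ R, Function.Injective fun j => φ j r := by
    intro r hr j j' h
    apply hinj r hr
    simp only at h ⊢
    rw [hθφ j r hr, hθφ j' r hr, h]
  have hord : ∀ j j', j ≠ j' → (∀ r ∈ R, φ j r < φ j' r) ∨ (∀ r ∈ R, φ j' r < φ j r) := by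
    intro j j' hne
    exact sign_const hR.isPreconnected (hφcont j) (hφcont j')
      (fun r hr h => hne (hφinj r hr h))
  obtain ⟨r₀, hr₀⟩ := hR.nonempty
  set σ := Tuple.sort fun j => φ j r₀ with hσ
  have hsm : StrictMono fun j => φ (σ j) r₀ :=
    (Tuple.monotone_sort fun j => φ j r₀).strictMono_of_injective
      ((hφinj r₀ hr₀).comp σ.injective)
  refine ⟨k, fun j => φ (σ j), fun j => hφcont (σ j), ?_, ?_, ?_⟩
  · intro r hr j j' hjj'
    have h0 : φ (σ j) r₀ < φ (σ j') r₀ := hsm hjj'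
    have hne : σ j ≠ σ j' := fun h => absurd (σ.injective h) (ne_of_lt hjj')
    rcases hord (σ j) (σ j') hne with h | h
    · exact h r hr
    · exact absurd h0 (not_lt.2 (le_of_lt (h r₀ hr₀)))
  · intro r hr t
    constructor
    · intro ht
      have hp : IsProjRoot p.natDegree (evalAt p r) (t : RP1) := Or.inl ⟨t, rfl, ht⟩
      obtain ⟨j, hj⟩ := (hroots r hr _).1 hp
      have h2 : ((φ j r : ℝ) : RP1) = ((t : ℝ) : RP1) := (hθφ j r hr).symm.trans hj
      have hφj : φ j r = t := OnePoint.coe_injective h2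
      exact ⟨σ.symm j, by simp [hφj]⟩
    · rintro ⟨j, rfl⟩
      have hp : IsProjRoot p.natDegree (evalAt p r) (θ (σ j) r) :=
        (hroots r hr _).2 ⟨σ j, rfl⟩
      rcases hp with ⟨a, ha, hroot⟩ | ⟨hinf, _⟩
      · show (evalAt p r).IsRoot (φ (σ j) r)
        have h2 : ((a : ℝ) : RP1) = ((φ (σ j) r : ℝ) : RP1) :=
          ha.symm.trans (hθφ (σ j) r hr)
        rw [show φ (σ j) r = a from (OnePoint.coe_injective h2).symm]
        exact hroot
      · exact absurd hinf (hNoInf (σ j) r hr)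
  · intro j
    obtain ⟨m, hm, hM⟩ := hmult (σ j)
    refine ⟨m, hm, fun r hr => ?_⟩
    have hM' := hM r hr
    rw [hθφ (σ j) r hr] at hM'
    exact hM'
end
end
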